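/- arXiv:1509.02127 — 2 statements merged into one kernel-verified Lean document; each statement's English description precedes it below -/
import Mathlib

section
/- Let A be a 3×3 real matrix which is symmetric, traceless, nonzero, and satisfies det A = 0. Then there exists a 3×3 real matrix H which is symmetric and traceless such that trace(adjugate(A) · H) ≠ 0. (Equivalently, the derivative of the determinant function, restricted to the space of symmetric traceless 3×3 matrices, is nonzero at A; hence the nonzero singular symmetric traceless matrices form a nonsingular stratum of codimension 1.) -/
open Matrix

private lemma key_trace_adj (M : Matrix (Fin 3) (Fin 3) ℝ) :
    2 * (adjugate M).trace = M.trace ^ 2 - (M * M).trace := by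
  rw [adjugate_fin_three]
  simp [Matrix.trace_fin_three, Matrix.mul_apply, Fin.sum_univ_three]
  ring

/-- At a nonzero singular symmetric traceless `3×3` real matrix, the derivative of
the determinant restricted to the space of symmetric traceless matrices is nonzero:
there is a symmetric traceless direction `H` with `trace (adjugate A * H) ≠ 0`. -/
theorem exists_symm_traceless_direction_det_deriv_ne_zero
    (A : Matrix (Fin 3) (Fin 3) ℝ) (hsymm : Aᵀ = A) (htr : A.trace = 0)
    (hne : A ≠ 0) (hdet : A.det = 0) :
    ∃ H : Matrix (Fin 3) (Fin 3) ℝ,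
      Hᵀ = H ∧ H.trace = 0 ∧ (A.adjugate * H).trace ≠ 0 := by
  set B := A.adjugate with hB
  have hBsymm : Bᵀ = B := by
    rw [hB, Matrix.adjugate_transpose, hsymm]
  have hsym' : ∀ i j, A j i = A i j := by
    intro i j
    conv_lhs => rw [← hsymm]
    rfl
  -- trace (A*A) is a sum of squares
  have htrAA : (A * A).trace = ∑ i, ∑ j, (A i j) ^ 2 := by
    rw [Matrix.trace]
    simp only [Matrix.diag, Matrix.mul_apply, sq]
    refine Finset.sum_congr rfl fun i _ => Finset.sum_congr rfl fun j _ => ?_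
    rw [hsym' i j]
  obtain ⟨i, j, hij⟩ : ∃ i j, A i j ≠ 0 := by
    by_contra h
    push_neg at h
    exact hne (Matrix.ext fun i j => h i j)
  have hpos : 0 < (A * A).trace := by
    rw [htrAA]
    refine Finset.sum_pos' (fun i _ => Finset.sum_nonneg fun j _ => sq_nonneg _)
      ⟨i, Finset.mem_univ i, Finset.sum_pos' (fun j _ => sq_nonneg _)
        ⟨j, Finset.mem_univ j, ?_⟩⟩
    exact lt_of_le_of_ne (sq_nonneg _) (Ne.symm (pow_ne_zero _ hij))
  have htB : 2 * B.trace = -(A * A).trace := by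
    have := key_trace_adj A
    rw [htr] at this
    linarith
  have htBne : B.trace ≠ 0 := by
    intro h
    rw [h] at htB
    linarith
  -- adjugate B = det A • A = 0
  have hadjB : B.adjugate = 0 := by
    rw [hB, Matrix.adjugate_adjugate A (by simp), hdet]
    norm_num
  have hBB : (B * B).trace = B.trace ^ 2 := by
    have := key_trace_adj B
    rw [hadjB] at this
    simp at this
    linarith
  refine ⟨B - (B.trace / 3) • 1, ?_, ?_, ?_⟩
  · rw [Matrix.transpose_sub, hBsymm, Matrix.transpose_smul, Matrix.transpose_one]
  · rw [Matrix.trace_sub, Matrix.trace_smul, Matrix.trace_one]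
    simp
  · rw [Matrix.mul_sub, Matrix.mul_smul, Matrix.mul_one, Matrix.trace_sub,
      Matrix.trace_smul, hBB]
    simp only [smul_eq_mul]
    intro h
    have : B.trace ^ 2 = 0 := by nlinarith
    exact htBne (pow_eq_zero_iff (by norm_num) |>.mp this)
end

section
/- Let M be a compact smooth manifold without boundary of dimension m, let E be a finite-dimensional real normed vector space, and let A ⊆ E be a linear subspace with m + dim A < dim E. Let f : M → E be a smooth map. Then for every ε > 0 there exists c ∈ E with ‖c‖ < ε such that f(x) + c ∉ A for all x ∈ M. In particular, smooth maps whose image is disjoint from A are dense among smooth maps M → E. -/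
open Manifold Set MeasureTheory Module

/-!
The bad translations `{c | ∃ x, f x + c ∈ A}` form the range of `(x, a) ↦ a - f x` on `M × A`,
a σ-compact manifold of dimension `dim M + dim A < dim E`. In each chart this map is a
differentiable map from a lower-dimensional space, whose image is Lebesgue-null: it factors
through a left inverse of a linear embedding into `E`, whose range is a null proper subspace.
Countably many charts cover `M × A`, so the bad set is null and misses points of every ball.
-/

section

variable {V E : Type*} [NormedAddCommGroup V] [NormedSpace ℝ V] [FiniteDimensional ℝ V]
  [NormedAddCommGroup E] [NormedSpace ℝ E] [FiniteDimensional ℝ E] [MeasurableSpace E]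
  [BorelSpace E] (μ : Measure E) [μ.IsAddHaarMeasure]

theorem MeasureTheory.addHaar_image_eq_zero_of_finrank_lt (hdim : finrank ℝ V < finrank ℝ E)
    {G : V → E} {s : Set V} (hG : DifferentiableOn ℝ G s) : μ (G '' s) = 0 := by
  obtain ⟨ι, hι⟩ := finrank_le_iff_exists_linearMap.1 hdim.le
  obtain ⟨π, hπι⟩ := ι.exists_leftInverse_of_injective (LinearMap.ker_eq_bot.2 hι)
  have hπ (v : V) : π (ι v) = v := LinearMap.congr_fun hπι v
  have hrange : μ (LinearMap.range ι) = 0 := Measure.addHaar_submodule μ _ fun htop => by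
    have := LinearMap.finrank_range_of_inj hι
    rw [htop, finrank_top] at this
    omega
  have himage : G '' s = (G ∘ π) '' (ι '' s) := by
    simp only [image_image, Function.comp_apply, hπ]
  rw [himage]
  refine addHaar_image_eq_zero_of_differentiableOn_of_addHaar_eq_zero μ ?_
    (measure_mono_null (image_subset_range _ _) hrange)
  refine hG.comp (LinearMap.toContinuousLinearMap π).differentiableOn ?_
  rintro _ ⟨v, hv, rfl⟩
  simpa [hπ] using hv

end

section

variable {F : Type*} [NormedAddCommGroup F] [NormedSpace ℝ F] [FiniteDimensional ℝ F]
  {H : Type*} [TopologicalSpace H] (I : ModelWithCorners ℝ F H)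
  {N : Type*} [TopologicalSpace N] [ChartedSpace H N] [IsManifold I 1 N]
  {E : Type*} [NormedAddCommGroup E] [NormedSpace ℝ E] [FiniteDimensional ℝ E]
  [MeasurableSpace E] [BorelSpace E] (μ : Measure E) [μ.IsAddHaarMeasure]
  {h : N → E}

theorem MeasureTheory.addHaar_image_chart_source_eq_zero (hdim : finrank ℝ F < finrank ℝ E)
    (hh : MDifferentiable I 𝓘(ℝ, E) h) (p : N) : μ (h '' (chartAt H p).source) = 0 := by
  have himage : h '' (chartAt H p).source =
      (h ∘ (extChartAt I p).symm) '' (extChartAt I p).target := by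
    rw [image_comp, PartialEquiv.symm_image_target_eq_source, extChartAt_source]
  rw [himage]
  refine addHaar_image_eq_zero_of_finrank_lt μ hdim ?_
  rw [← mdifferentiableOn_iff_differentiableOn]
  exact hh.comp_mdifferentiableOn mdifferentiableOn_extChartAt_symm

theorem MeasureTheory.addHaar_range_eq_zero_of_finrank_lt [SigmaCompactSpace N]
    (hdim : finrank ℝ F < finrank ℝ E) (hh : MDifferentiable I 𝓘(ℝ, E) h) :
    μ (range h) = 0 := by
  obtain ⟨s, hs, hcover⟩ :=
    countable_cover_nhds_of_sigmaCompact fun p : N => chart_source_mem_nhds H p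
  rw [← image_univ, ← hcover, image_iUnion₂, measure_biUnion_null_iff hs]
  exact fun p _ => addHaar_image_chart_source_eq_zero I μ hdim hh p

end

theorem exists_small_translation_avoiding_subspace_general
    {F : Type*} [NormedAddCommGroup F] [NormedSpace ℝ F] [FiniteDimensional ℝ F]
    {H : Type*} [TopologicalSpace H] (I : ModelWithCorners ℝ F H)
    {M : Type*} [TopologicalSpace M] [ChartedSpace H M] [IsManifold I (⊤ : ℕ∞) M]
    [CompactSpace M]
    {E : Type*} [NormedAddCommGroup E] [NormedSpace ℝ E] [FiniteDimensional ℝ E]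
    (A : Submodule ℝ E)
    (hdim : Module.finrank ℝ F + Module.finrank ℝ A < Module.finrank ℝ E)
    (f : M → E) (hf : ContMDiff I 𝓘(ℝ, E) (⊤ : ℕ∞) f) :
    ∀ ε : ℝ, 0 < ε → ∃ c : E, ‖c‖ < ε ∧ ∀ x : M, f x + c ∉ A := by
  intro ε hε
  borelize E
  let Φ : M × A → E := fun p => (p.2 : E) - f p.1
  have hΦ : MDifferentiable (I.prod 𝓘(ℝ, A)) 𝓘(ℝ, E) Φ :=
    ((A.subtypeL.contMDiff.comp contMDiff_snd).sub (hf.comp contMDiff_fst)).mdifferentiable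
      (by simp)
  have hnull : (Measure.addHaar : Measure E) (range Φ) = 0 :=
    addHaar_range_eq_zero_of_finrank_lt (I.prod 𝓘(ℝ, A)) _ (by rwa [finrank_prod]) hΦ
  obtain ⟨c, hcΦ, hc⟩ := (interior_eq_empty_iff_dense_compl.1
    (Measure.addHaar.interior_eq_empty_of_null hnull)).exists_mem_open Metric.isOpen_ball
    ⟨0, Metric.mem_ball_self hε⟩
  refine ⟨c, mem_ball_zero_iff.1 hc, fun x hx => hcΦ ⟨(x, ⟨f x + c, hx⟩), ?_⟩⟩
  simp [Φ]

/-- Density of maps avoiding a small subspace: if `M` is a compact smooth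
boundaryless manifold of dimension `m`, `A ⊆ E` a linear subspace with
`m + dim A < dim E`, and `f : M → E` smooth, then arbitrarily small translations
of `f` avoid `A`. -/
theorem exists_small_translation_avoiding_subspace
    {F : Type*} [NormedAddCommGroup F] [NormedSpace ℝ F] [FiniteDimensional ℝ F]
    {H : Type*} [TopologicalSpace H] (I : ModelWithCorners ℝ F H) [I.Boundaryless]
    {M : Type*} [TopologicalSpace M] [ChartedSpace H M] [IsManifold I (⊤ : ℕ∞) M]
    [CompactSpace M]
    {E : Type*} [NormedAddCommGroup E] [NormedSpace ℝ E] [FiniteDimensional ℝ E]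
    (A : Submodule ℝ E)
    (hdim : Module.finrank ℝ F + Module.finrank ℝ A < Module.finrank ℝ E)
    (f : M → E) (hf : ContMDiff I 𝓘(ℝ, E) (⊤ : ℕ∞) f) :
    ∀ ε : ℝ, 0 < ε → ∃ c : E, ‖c‖ < ε ∧ ∀ x : M, f x + c ∉ A :=
  exists_small_translation_avoiding_subspace_general I A hdim f hf
end
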